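/- arXiv:0909.0552 — 2 statements merged into one kernel-verified Lean document; each statement's English description precedes it below -/
import Mathlib

section
/- If D is a bounded t-structure on a triangulated category C with heart A, and A ⊆ B where B is the heart of another bounded t-structure, then A = B. -/
open CategoryTheory Category Limits Pretriangulated

universe v u

variable (C : Type u) [Category.{v} C] [HasZeroObject C] [HasShift C ℤ]
  [Preadditive C] [∀ n : ℤ, (CategoryTheory.shiftFunctor C n).Additive] [Pretriangulated C]

namespace Paper

/-- The right perpendicular of a set of objects. -/
def perpSet (D : Set C) : Set C := {c | ∀ d ∈ D, ∀ φ : d ⟶ c, φ = 0}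

/-- A `t`-structure given by its aisle `D`. -/
structure IsTStructure (D : Set C) : Prop where
  isoClosed : ∀ {x y : C}, (x ≅ y) → x ∈ D → y ∈ D
  shift_mem : ∀ d ∈ D, d⟦(1 : ℤ)⟧ ∈ D
  exists_triangle : ∀ c : C, ∃ d ∈ D, ∃ d' ∈ perpSet C D,
    ∃ (f : d ⟶ c) (g : c ⟶ d') (h : d' ⟶ d⟦(1 : ℤ)⟧),
      Triangle.mk f g h ∈ distTriang C

/-- The shift `S[n]` of a set of objects. -/
def shiftSet (S : Set C) (n : ℤ) : Set C := {c | c⟦(-n : ℤ)⟧ ∈ S}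

/-- The heart `D ∩ D^⊥[1]` of a `t`-structure. -/
def heartSet (D : Set C) : Set C := {c | c ∈ D ∧ c⟦(-1 : ℤ)⟧ ∈ perpSet C D}

/-- Boundedness: every object lies in `D[-n] ∩ D^⊥[n]` for some `n`. -/
def IsBounded (D : Set C) : Prop :=
  ∀ c : C, ∃ n : ℕ, c⟦(n : ℤ)⟧ ∈ D ∧ c⟦(-(n : ℤ))⟧ ∈ perpSet C D

/-- A short exact sequence `0 → t → a → f → 0` in the heart `A`, encoded as a
distinguished triangle `t → a → f → t[1]` whose objects all lie in `A`. -/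
def heartTriangle (A : Set C) (t a f : C) : Prop :=
  t ∈ A ∧ a ∈ A ∧ f ∈ A ∧
    ∃ (i : t ⟶ a) (p : a ⟶ f) (h : f ⟶ t⟦(1 : ℤ)⟧), Triangle.mk i p h ∈ distTriang C

/-- `x` is a simple object of the heart `A`. -/
def SimpleIn (A : Set C) (x : C) : Prop :=
  x ∈ A ∧ ¬ IsZero x ∧ ∀ t f : C, heartTriangle C A t x f → IsZero t ∨ IsZero f

/-- The extension-closed subcategory of `C` generated by `S`. -/
inductive ExtClosure (S : Set C) : C → Prop
  | of {c : C} (h : c ∈ S) : ExtClosure S c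
  | zero {c : C} (h : IsZero c) : ExtClosure S c
  | iso {x y : C} (e : x ≅ y) (h : ExtClosure S x) : ExtClosure S y
  | ext {a b c : C} (f : a ⟶ b) (g : b ⟶ c) (h : c ⟶ a⟦(1 : ℤ)⟧)
      (hT : Triangle.mk f g h ∈ distTriang C)
      (ha : ExtClosure S a) (hc : ExtClosure S c) : ExtClosure S b

/-- The extension closure of `S` inside the heart `A`. -/
inductive HeartExt (A : Set C) (S : Set C) : C → Prop
  | of {c : C} (h : c ∈ S) : HeartExt A S c
  | zero {c : C} (h : IsZero c) (hA : c ∈ A) : HeartExt A S c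
  | iso {x y : C} (e : x ≅ y) (hy : y ∈ A) (h : HeartExt A S x) : HeartExt A S y
  | ext {t a f : C} (ht : HeartExt A S t) (hf : HeartExt A S f)
      (h : heartTriangle C A t a f) : HeartExt A S a

/-- A torsion pair `(T, F)` in the heart `A`. -/
structure TorsionPairIn (A T F : Set C) : Prop where
  subT : T ⊆ A
  subF : F ⊆ A
  isoT : ∀ {x y : C}, (x ≅ y) → x ∈ T → y ∈ T
  isoF : ∀ {x y : C}, (x ≅ y) → x ∈ F → y ∈ F
  hom_zero : ∀ t ∈ T, ∀ f ∈ F, ∀ φ : t ⟶ f, φ = 0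
  exists_ses : ∀ a ∈ A, ∃ t ∈ T, ∃ f ∈ F, heartTriangle C A t a f

/-- The perpendicular of `T` taken inside the heart `A`. -/
def perpIn (A T : Set C) : Set C := {a | a ∈ A ∧ ∀ t ∈ T, ∀ φ : t ⟶ a, φ = 0}

/-- The left tilt `⟨F, T[-1]⟩` of the heart `A` at a torsion class `T` (with `F = T^⊥ ∩ A`). -/
def leftTilt (A T : Set C) : Set C :=
  {c | ExtClosure C (perpIn C A T ∪ shiftSet C T (-1)) c}

/-- Objects of the heart `A` with a finite composition series. -/
inductive FiniteLengthIn (A : Set C) : C → Prop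
  | zero {a : C} (h : IsZero a) : FiniteLengthIn A a
  | step {s a q : C} (hs : SimpleIn C A s) (hq : FiniteLengthIn A q)
      (ht : heartTriangle C A s a q) : FiniteLengthIn A a


/-! Every object of the aisle `D` of a bounded t-structure is an iterated extension of
nonnegative shifts of objects of its heart, and every object of `D^⊥` one of negative shifts
(peel off one truncation at a time). If the heart of `D` lies in the heart of `D'`, these
pieces lie in `D'`, resp. `D'^⊥`, so `D ⊆ D'` and `D^⊥ ⊆ D'^⊥`. Since an aisle is the left
orthogonal of its perpendicular, the second inclusion gives `D' ⊆ D`, hence `D = D'`. -/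

section

variable {𝒜 : Type*} [Category 𝒜] [Preadditive 𝒜] {D : Set 𝒜}

lemma mem_perpSet_of_iso {x y : 𝒜} (e : x ≅ y) (hx : x ∈ perpSet 𝒜 D) : y ∈ perpSet 𝒜 D :=
  fun d hd φ => by simpa using hx d hd (φ ≫ e.inv)

lemma mem_perpSet_of_isZero {x : 𝒜} (hx : IsZero x) : x ∈ perpSet 𝒜 D :=
  fun _ _ φ => hx.eq_of_tgt φ 0

lemma isZero_of_mem_of_mem_perpSet {x : 𝒜} (hx : x ∈ D) (hx' : x ∈ perpSet 𝒜 D) : IsZero x :=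
  IsZero.iff_id_eq_zero x |>.2 (hx' x hx (𝟙 x))

end

section

variable {C} {D D' : Set C}

lemma mem_perpSet_obj₂_of_distTriang {T : Triangle C} (hT : T ∈ distTriang C)
    (h₁ : T.obj₁ ∈ perpSet C D) (h₃ : T.obj₃ ∈ perpSet C D) : T.obj₂ ∈ perpSet C D := by
  intro d hd φ
  obtain ⟨ψ, rfl⟩ := Triangle.coyoneda_exact₂ T hT φ (h₃ d hd _)
  rw [h₁ d hd ψ, zero_comp]

namespace IsTStructure

variable (hD : IsTStructure C D)
include hD

lemma mem_of_forall_mem_perpSet_hom_eq_zero {x : C}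
    (hx : ∀ y ∈ perpSet C D, ∀ φ : x ⟶ y, φ = 0) : x ∈ D := by
  obtain ⟨d, hd, d', hd', f, g, h, hT⟩ := hD.exists_triangle x
  obtain ⟨ρ, hρ⟩ := Triangle.yoneda_exact₃ _ hT (𝟙 d') (by
    change g ≫ 𝟙 d' = 0
    rw [hx d' hd' g, zero_comp])
  have hρ0 : ρ = 0 := hd' _ (hD.shift_mem d hd) ρ
  have hd'0 : IsZero d' := by
    rw [IsZero.iff_id_eq_zero, hρ, hρ0, comp_zero]
    rfl
  have : IsIso f := (Triangle.isZero₃_iff_isIso₁ _ hT).1 hd'0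
  exact hD.isoClosed (asIso f) hd

lemma mem_of_isZero {x : C} (hx : IsZero x) : x ∈ D :=
  hD.mem_of_forall_mem_perpSet_hom_eq_zero fun _ _ φ => hx.eq_of_src φ 0

lemma obj₂_mem_of_distTriang {T : Triangle C} (hT : T ∈ distTriang C)
    (h₁ : T.obj₁ ∈ D) (h₃ : T.obj₃ ∈ D) : T.obj₂ ∈ D := by
  refine hD.mem_of_forall_mem_perpSet_hom_eq_zero fun y hy φ => ?_
  obtain ⟨ψ, rfl⟩ := Triangle.yoneda_exact₂ T hT φ (hy _ h₁ _)
  rw [hy _ h₃ ψ, comp_zero]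

lemma shift_natCast_mem {x : C} (hx : x ∈ D) (n : ℕ) : x⟦(n : ℤ)⟧ ∈ D := by
  induction n with
  | zero => exact hD.isoClosed ((shiftFunctorZero' C ((0 : ℕ) : ℤ) rfl).app x).symm hx
  | succ n ih =>
    exact hD.isoClosed ((shiftFunctorAdd' C (n : ℤ) 1 (n + 1 : ℕ) (by push_cast; rfl)).app x).symm
      (hD.shift_mem _ ih)

lemma shift_neg_one_mem_perpSet {x : C} (hx : x ∈ perpSet C D) :
    x⟦(-1 : ℤ)⟧ ∈ perpSet C D := by
  intro d hd φ
  apply (shiftFunctor C (1 : ℤ)).map_injective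
  rw [Functor.map_zero, ← cancel_mono ((shiftFunctorCompIsoId C (-1 : ℤ) 1 (by norm_num)).app x).hom,
    zero_comp]
  exact hx _ (hD.shift_mem d hd) _

lemma shift_neg_natCast_mem_perpSet {x : C} (hx : x ∈ perpSet C D) (n : ℕ) :
    x⟦-(n : ℤ)⟧ ∈ perpSet C D := by
  induction n with
  | zero => exact mem_perpSet_of_iso ((shiftFunctorZero' C (-((0 : ℕ) : ℤ)) (by simp)).app x).symm hx
  | succ n ih =>
    exact mem_perpSet_of_iso
      ((shiftFunctorAdd' C (-(n : ℤ)) (-1) (-(n + 1 : ℕ)) (by push_cast; ring)).app x).symm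
      (hD.shift_neg_one_mem_perpSet ih)

lemma mem_heartSet_of_distTriang {x d d' : C} {f : d ⟶ x} {g : x ⟶ d'} {h : d' ⟶ d⟦(1 : ℤ)⟧}
    (hT : Triangle.mk f g h ∈ distTriang C) (hd : d ∈ D) (hd' : d' ∈ perpSet C D)
    (hx : x⟦(-1 : ℤ)⟧ ∈ perpSet C D) : d ∈ heartSet C D :=
  ⟨hd, mem_perpSet_obj₂_of_distTriang
    (inv_rot_of_distTriang _ (Triangle.shift_distinguished _ hT (-1)))
    (hD.shift_neg_one_mem_perpSet (hD.shift_neg_one_mem_perpSet hd')) hx⟩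

lemma shift_one_mem_heartSet_of_distTriang {x d d' : C} {f : d ⟶ x} {g : x ⟶ d'}
    {h : d' ⟶ d⟦(1 : ℤ)⟧} (hT : Triangle.mk f g h ∈ distTriang C) (hd : d ∈ D)
    (hd' : d' ∈ perpSet C D) (hx : x⟦(1 : ℤ)⟧ ∈ D) : d'⟦(1 : ℤ)⟧ ∈ heartSet C D :=
  ⟨hD.obj₂_mem_of_distTriang (Triangle.shift_distinguished _ (rot_of_distTriang _ hT) 1) hx
    (hD.shift_mem _ (hD.shift_mem _ hd)),
    mem_perpSet_of_iso ((shiftFunctorCompIsoId C (1 : ℤ) (-1) (by norm_num)).app d').symm hd'⟩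

lemma subset_of_perpSet_subset (h : perpSet C D ⊆ perpSet C D') : D' ⊆ D :=
  fun x hx => hD.mem_of_forall_mem_perpSet_hom_eq_zero fun _ hy => h hy x hx

end IsTStructure

lemma mem_of_mem_of_shift_neg_natCast_mem_perpSet (hD : IsTStructure C D)
    (hD' : IsTStructure C D') (hsub : heartSet C D ⊆ heartSet C D') (n : ℕ) {x : C}
    (hx : x ∈ D) (hxn : x⟦-(n : ℤ)⟧ ∈ perpSet C D) : x ∈ D' := by
  induction n generalizing x with
  | zero =>
    exact hD'.mem_of_isZero (isZero_of_mem_of_mem_perpSet hx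
      (mem_perpSet_of_iso ((shiftFunctorZero' C (-((0 : ℕ) : ℤ)) (by simp)).app x) hxn))
  | succ n ih =>
    obtain ⟨d, hd, d', hd', f, g, h, hT⟩ := hD.exists_triangle (x⟦-(n : ℤ)⟧)
    have hxx : x⟦-(n : ℤ)⟧⟦(n : ℤ)⟧ ≅ x := (shiftFunctorCompIsoId C (-(n : ℤ)) n (by ring)).app x
    have hd_heart : d ∈ heartSet C D' := hsub <| hD.mem_heartSet_of_distTriang hT hd hd'
      (mem_perpSet_of_iso
        ((shiftFunctorAdd' C (-(n : ℤ)) (-1) (-(n + 1 : ℕ)) (by push_cast; ring)).app x) hxn)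
    have hd'n : d'⟦(n : ℤ)⟧ ∈ D' := ih
      (hD.obj₂_mem_of_distTriang (Triangle.shift_distinguished _ (rot_of_distTriang _ hT) n)
        (hD.isoClosed hxx.symm hx) (hD.shift_natCast_mem (hD.shift_mem _ hd) n))
      (mem_perpSet_of_iso ((shiftFunctorCompIsoId C (n : ℤ) (-n) (by ring)).app d').symm hd')
    exact hD'.isoClosed hxx (hD'.obj₂_mem_of_distTriang (Triangle.shift_distinguished _ hT n)
      (hD'.shift_natCast_mem hd_heart.1 n) hd'n)

lemma mem_perpSet_of_mem_perpSet_of_shift_natCast_mem (hD : IsTStructure C D)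
    (hD' : IsTStructure C D') (hsub : heartSet C D ⊆ heartSet C D') (n : ℕ) {x : C}
    (hx : x ∈ perpSet C D) (hxn : x⟦(n : ℤ)⟧ ∈ D) : x ∈ perpSet C D' := by
  induction n generalizing x with
  | zero =>
    exact mem_perpSet_of_isZero (isZero_of_mem_of_mem_perpSet
      (hD.isoClosed ((shiftFunctorZero' C ((0 : ℕ) : ℤ) rfl).app x) hxn) hx)
  | succ n ih =>
    obtain ⟨d, hd, d', hd', f, g, h, hT⟩ := hD.exists_triangle (x⟦(n : ℤ)⟧)
    have hxx : x⟦(n : ℤ)⟧⟦-(n : ℤ)⟧ ≅ x := (shiftFunctorCompIsoId C (n : ℤ) (-n) (by ring)).app x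
    have hd'_heart : d'⟦(1 : ℤ)⟧ ∈ heartSet C D' := hsub <|
      hD.shift_one_mem_heartSet_of_distTriang hT hd hd'
        (hD.isoClosed ((shiftFunctorAdd' C (n : ℤ) 1 (n + 1 : ℕ) (by push_cast; rfl)).app x) hxn)
    have hd'_perp : d' ∈ perpSet C D' :=
      mem_perpSet_of_iso ((shiftFunctorCompIsoId C (1 : ℤ) (-1) (by norm_num)).app d') hd'_heart.2
    have hdn : d⟦-(n : ℤ)⟧ ∈ perpSet C D' := ih
      (mem_perpSet_obj₂_of_distTriang
        (Triangle.shift_distinguished _ (inv_rot_of_distTriang _ hT) (-n))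
        (hD.shift_neg_natCast_mem_perpSet (hD.shift_neg_one_mem_perpSet hd') n)
        (mem_perpSet_of_iso hxx.symm hx))
      (hD.isoClosed ((shiftFunctorCompIsoId C (-(n : ℤ)) n (by ring)).app d).symm hd)
    exact mem_perpSet_of_iso hxx (mem_perpSet_obj₂_of_distTriang
      (Triangle.shift_distinguished _ hT (-n)) hdn (hD'.shift_neg_natCast_mem_perpSet hd'_perp n))

lemma subset_of_heartSet_subset (hD : IsTStructure C D) (hDb : IsBounded C D)
    (hD' : IsTStructure C D') (hsub : heartSet C D ⊆ heartSet C D') : D ⊆ D' := fun x hx =>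
  let ⟨n, _, hxn⟩ := hDb x
  mem_of_mem_of_shift_neg_natCast_mem_perpSet hD hD' hsub n hx hxn

lemma perpSet_subset_of_heartSet_subset (hD : IsTStructure C D) (hDb : IsBounded C D)
    (hD' : IsTStructure C D') (hsub : heartSet C D ⊆ heartSet C D') :
    perpSet C D ⊆ perpSet C D' := fun x hx =>
  let ⟨n, hxn, _⟩ := hDb x
  mem_perpSet_of_mem_perpSet_of_shift_natCast_mem hD hD' hsub n hx hxn

end

theorem heart_subset_heart_eq (D D' : Set C)
    (hD : IsTStructure C D) (hDb : IsBounded C D)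
    (hD' : IsTStructure C D')
    (hsub : heartSet C D ⊆ heartSet C D') :
    heartSet C D = heartSet C D' := by
  have hDD' : D ⊆ D' := subset_of_heartSet_subset hD hDb hD' hsub
  have hD'D : D' ⊆ D :=
    hD.subset_of_perpSet_subset (perpSet_subset_of_heartSet_subset hD hDb hD' hsub)
  rw [hDD'.antisymm hD'D]

end Paper
end

section
/- Let s be a simple object in a finite-length heart A of a bounded t-structure, and let ⟨s⟩ be the full subcategory of objects all of whose composition factors are isomorphic to s. Then ⟨s⟩ is a torsion class in A, and ⟨s⟩^⊥ = {a ∈ A | Hom(s, a) = 0}. -/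
/-!
Induct on the length of `a`. If `Hom(s, a) = 0`, then `0 ⟶ a ⟶ a` is the required sequence.
Otherwise Schur makes a nonzero `s ⟶ a` a monomorphism, and `a / s` is shorter. Let
`g : a / s ⟶ f` be the torsion-free quotient of `a / s`. The kernel of `a ⟶ a / s ⟶ f` is an
extension of `ker g` by `s`, so it lies in `⟨s⟩`. That `a / s` is shorter for *every* simple
subobject `s` is the piece of Jordan–Hölder the argument needs. Since `Hom(s, -) = 0` passes to
extensions, it also identifies `⟨s⟩^⊥`.
-/

open CategoryTheory Category Limits

universe v u

variable (C : Type u) [Category.{v} C] [Abelian C]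

namespace Paper

/-- A torsion pair `(T, F)` in the abelian category `C`. -/
structure TorsionPair (T F : Set C) : Prop where
  isoT : ∀ {x y : C}, (x ≅ y) → x ∈ T → y ∈ T
  isoF : ∀ {x y : C}, (x ≅ y) → x ∈ F → y ∈ F
  hom_zero : ∀ t ∈ T, ∀ f ∈ F, ∀ φ : t ⟶ f, φ = 0
  exists_ses : ∀ a : C, ∃ t ∈ T, ∃ f ∈ F, ∃ (i : t ⟶ a) (p : a ⟶ f)
    (w : i ≫ p = 0), (ShortComplex.mk i p w).ShortExact

/-- The extension-closed subcategory generated by `S`. -/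
inductive ExtClosureAb (S : Set C) : C → Prop
  | of {c : C} (h : c ∈ S) : ExtClosureAb S c
  | zero {c : C} (h : IsZero c) : ExtClosureAb S c
  | iso {x y : C} (e : x ≅ y) (h : ExtClosureAb S x) : ExtClosureAb S y
  | ext {a b c : C} (i : a ⟶ b) (p : b ⟶ c) (w : i ≫ p = 0)
      (hse : (ShortComplex.mk i p w).ShortExact)
      (ha : ExtClosureAb S a) (hc : ExtClosureAb S c) : ExtClosureAb S b

/-- Objects with a finite composition series. -/
inductive FinLengthAb : C → Prop
  | zero {a : C} (h : IsZero a) : FinLengthAb a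
  | step {s a q : C} (hs : Simple s) (i : s ⟶ a) (p : a ⟶ q) (w : i ≫ p = 0)
      (hse : (ShortComplex.mk i p w).ShortExact) (hq : FinLengthAb q) : FinLengthAb a

/-- Indecomposable objects. -/
def Indec (x : C) : Prop :=
  ¬ IsZero x ∧ ∀ y z : C, Nonempty (x ≅ y ⊞ z) → IsZero y ∨ IsZero z

section

variable {C}

lemma hom_eq_zero_of_extClosureAb {s a : C} (hsa : ∀ φ : s ⟶ a, φ = 0) {t : C}
    (ht : ExtClosureAb C {s} t) (ψ : t ⟶ a) : ψ = 0 := by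
  induction ht with
  | of h => obtain rfl := h; exact hsa ψ
  | zero h => exact h.eq_of_src ψ 0
  | iso e _ ih => simpa using e.inv ≫= ih (e.hom ≫ ψ)
  | ext i p w hse _ _ iha ihc =>
    obtain ⟨d, hd : p ≫ d = ψ⟩ := CokernelCofork.IsColimit.desc' hse.gIsCokernel ψ (iha (i ≫ ψ))
    rw [← hd, ihc d, comp_zero]

/-- `kernel f ⟶ kernel (f ≫ g) ⟶ kernel g` is short exact, since `cokernel f = 0`. -/
lemma ExtClosureAb.kernel_comp {S : Set C} {X Y Z : C} (f : X ⟶ Y) [Epi f] (g : Y ⟶ Z)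
    (hf : ExtClosureAb C S (kernel f)) (hg : ExtClosureAb C S (kernel g)) :
    ExtClosureAb C S (kernel (f ≫ g)) := by
  have hseq := kernelCokernelCompSequence_exact f g
  refine .ext (kernel.map f (f ≫ g) (𝟙 _) g (by simp)) (kernel.map (f ≫ g) g f (𝟙 _) (by simp))
    (by ext; simp)
    { exact := hseq.exact 0
      epi_g := (hseq.exact 1).epi_f ((isZero_cokernel_of_epi f).eq_of_tgt _ _) } hf hg

inductive HasLength : C → ℕ → Prop
  | zero {a : C} (h : IsZero a) : HasLength a 0
  | step {s a : C} {n : ℕ} [Simple s] (i : s ⟶ a) [Mono i] (h : HasLength (cokernel i) n) :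
      HasLength a (n + 1)

lemma HasLength.of_iso {a b : C} {n : ℕ} (h : HasLength a n) (e : a ≅ b) : HasLength b n := by
  induction h generalizing b with
  | zero h => exact .zero (h.of_iso e.symm)
  | step i _ ih => exact .step (i ≫ e.hom) (ih (cokernelCompIsIso i e.hom).symm)

lemma FinLengthAb.exists_hasLength {a : C} (h : FinLengthAb C a) : ∃ n, HasLength a n := by
  induction h with
  | zero h => exact ⟨0, .zero h⟩
  | step _ i _ _ hse _ ih =>
    obtain ⟨n, hn⟩ := ih
    have := hse.mono_f
    exact ⟨n + 1, .step i (hn.of_iso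
      (IsColimit.coconePointUniqueUpToIso hse.gIsCokernel (colimit.isColimit _)))⟩

lemma exists_iso_comp_eq_of_comp_cokernel_π_eq_zero {t s a : C} [Simple t] [Simple s]
    (φ : t ⟶ a) [Mono φ] (i : s ⟶ a) [Mono i] (h : φ ≫ cokernel.π i = 0) :
    ∃ e : t ≅ s, e.hom ≫ i = φ := by
  have hfac := Abelian.monoLift_comp i φ h
  have : Mono (Abelian.monoLift i φ h) := mono_of_mono_fac hfac
  have : IsIso (Abelian.monoLift i φ h) := isIso_of_mono_of_nonzero fun h0 =>
    Simple.not_isZero t (IsZero.of_mono_eq_zero φ (by rw [← hfac, h0, zero_comp]))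
  exact ⟨asIso (Abelian.monoLift i φ h), hfac⟩

lemma comp_cokernel_π_eq_zero_comm {t s a : C} [Simple t] [Simple s]
    {φ : t ⟶ a} [Mono φ] {i : s ⟶ a} [Mono i] (h : φ ≫ cokernel.π i = 0) :
    i ≫ cokernel.π φ = 0 := by
  obtain ⟨e, he⟩ := exists_iso_comp_eq_of_comp_cokernel_π_eq_zero φ i h
  rw [← e.inv_hom_id_assoc i, he, assoc, cokernel.condition, comp_zero]

noncomputable def cokernelCokernelπHom {t s a : C} (φ : t ⟶ a) (i : s ⟶ a) :
    cokernel (i ≫ cokernel.π φ) ⟶ cokernel (φ ≫ cokernel.π i) :=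
  cokernel.desc _
    (cokernel.desc φ (cokernel.π i ≫ cokernel.π (φ ≫ cokernel.π i))
      (by rw [← assoc, cokernel.condition]))
    (by rw [assoc, cokernel.π_desc, ← assoc, cokernel.condition, zero_comp])

lemma cokernelCokernelπHom_comp {t s a : C} (φ : t ⟶ a) (i : s ⟶ a) :
    cokernelCokernelπHom φ i ≫ cokernelCokernelπHom i φ = 𝟙 _ := by
  ext
  simp [cokernelCokernelπHom]

/-- Both sides are the quotient of `a` by the images of `t` and `s`. -/
noncomputable def cokernelCokernelπIso {t s a : C} (φ : t ⟶ a) (i : s ⟶ a) :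
    cokernel (i ≫ cokernel.π φ) ≅ cokernel (φ ≫ cokernel.π i) where
  hom := cokernelCokernelπHom φ i
  inv := cokernelCokernelπHom i φ
  hom_inv_id := cokernelCokernelπHom_comp φ i
  inv_hom_id := cokernelCokernelπHom_comp i φ

/-- Any simple subobject can start a composition series (a fragment of Jordan–Hölder). -/
theorem HasLength.cokernel_of_simple {t : C} [Simple t] :
    ∀ {n : ℕ} {a : C}, HasLength a (n + 1) → ∀ (φ : t ⟶ a) [Mono φ], HasLength (cokernel φ) n
  | n, _, h, φ, _ => by
    obtain ⟨⟩ | ⟨i, hq⟩ := h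
    by_cases hφi : φ ≫ cokernel.π i = 0
    · obtain ⟨e, he⟩ := exists_iso_comp_eq_of_comp_cokernel_π_eq_zero φ i hφi
      exact hq.of_iso ((cokernelEpiComp e.hom i).symm ≪≫ cokernelIsoOfEq he)
    · have := mono_of_nonzero_from_simple hφi
      have hiφ : i ≫ cokernel.π φ ≠ 0 := mt comp_cokernel_π_eq_zero_comm hφi
      have := mono_of_nonzero_from_simple hiφ
      cases n with
      | zero => cases hq with | zero hz => exact absurd (hz.eq_of_tgt _ _) hφi
      | succ n =>
        exact .step (i ≫ cokernel.π φ)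
          ((hq.cokernel_of_simple _).of_iso (cokernelCokernelπIso φ i).symm)

lemma HasLength.exists_epi_extClosureAb_kernel (s : C) [Simple s] (n : ℕ) :
    ∀ {a : C}, HasLength a n → ∃ (f : C) (g : a ⟶ f),
      Epi g ∧ ExtClosureAb C {s} (kernel g) ∧ ∀ φ : s ⟶ f, φ = 0 := by
  induction n with
  | zero =>
    rintro a ⟨ha⟩
    exact ⟨a, 𝟙 a, inferInstance, .zero (isZero_kernel_of_mono _), fun φ => ha.eq_of_tgt φ 0⟩
  | succ n ih =>
    intro a ha
    by_cases hsa : ∀ φ : s ⟶ a, φ = 0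
    · exact ⟨a, 𝟙 a, inferInstance, .zero (isZero_kernel_of_mono _), hsa⟩
    obtain ⟨φ, hφ⟩ := not_forall.mp hsa
    have := mono_of_nonzero_from_simple hφ
    obtain ⟨f, g, _, hker, hf⟩ := ih (ha.cokernel_of_simple φ)
    have hφker : s ≅ kernel (cokernel.π φ) := IsLimit.conePointUniqueUpToIso
      (Abelian.monoIsKernelOfCokernel _ (colimit.isColimit _)) (limit.isLimit _)
    exact ⟨f, cokernel.π φ ≫ g, epi_comp _ _,
      .kernel_comp _ _ (.iso hφker (.of rfl)) hker, hf⟩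

end

/-- For a simple object `s` of a finite-length abelian category (such as a
finite-length heart of a bounded t-structure), the extension closure `⟨s⟩` of `{s}` (the
objects all of whose composition factors are isomorphic to `s`) is a torsion class, with
`⟨s⟩^⊥ = {a | Hom(s, a) = 0}`. -/
theorem extClosure_simple_torsion_class
    (hfl : ∀ x : C, FinLengthAb C x) (s : C) (hs : Simple s) :
    TorsionPair C {c : C | ExtClosureAb C {s} c}
      {c : C | ∀ t : C, ExtClosureAb C {s} t → ∀ φ : t ⟶ c, φ = 0} ∧
    {c : C | ∀ t : C, ExtClosureAb C {s} t → ∀ φ : t ⟶ c, φ = 0}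
      = {a : C | ∀ φ : s ⟶ a, φ = 0} := by
  have hperp : {c : C | ∀ t : C, ExtClosureAb C {s} t → ∀ φ : t ⟶ c, φ = 0}
      = {a : C | ∀ φ : s ⟶ a, φ = 0} :=
    Set.ext fun a => ⟨fun h => h s (.of rfl), fun h _ => hom_eq_zero_of_extClosureAb h⟩
  refine ⟨⟨fun e => .iso e, fun e hf t ht φ => ?_, fun t ht f hf => hf t ht,
    fun a => ?_⟩, hperp⟩
  · simpa using hf t ht (φ ≫ e.inv) =≫ e.hom
  · obtain ⟨n, hn⟩ := (hfl a).exists_hasLength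
    obtain ⟨f, g, _, hker, hf⟩ := hn.exists_epi_extClosureAb_kernel s
    exact ⟨kernel g, hker, f, hperp ▸ hf, kernel.ι g, g, kernel.condition g,
      { exact := ShortComplex.exact_of_f_is_kernel _ (kernelIsKernel g) }⟩

end Paper
end
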